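/- arXiv:1507.05664 — 4 statements merged into one kernel-verified Lean document; each statement's English description precedes it below -/
import Mathlib

section
/- Fix positive integers K and I with K dividing I+1 and I+1 > K. Define η = (1 - K/(I+1))^((I+1)/K - 1) / (1 - 1/(I+1))^I. Then 1 ≤ η ≤ e. -/
lemma pow_le_exp_aux (n : ℕ) (hn : 2 ≤ n) :
    (1 - 1/(n:ℝ)) ^ (n-1) ≤ Real.exp (-1 + 1/n) := by
  have hn' : (2:ℝ) ≤ n := by exact_mod_cast hn
  have hb : (0:ℝ) ≤ 1 - 1/n := by
    rw [sub_nonneg, div_le_one (by linarith)]; linarith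
  have h1 : (1 - 1/(n:ℝ)) ≤ Real.exp (-(1/n)) := by
    have := Real.add_one_le_exp (-(1/(n:ℝ)))
    linarith
  calc (1 - 1/(n:ℝ)) ^ (n-1) ≤ (Real.exp (-(1/n))) ^ (n-1) := pow_le_pow_left₀ hb h1 _
    _ = Real.exp (((n-1 : ℕ):ℝ) * (-(1/n))) := by rw [← Real.exp_nat_mul]
    _ = Real.exp (-1 + 1/n) := by
        congr 1
        rw [Nat.cast_sub (by omega), Nat.cast_one]
        field_simp
        ring

lemma exp_le_pow_aux (n : ℕ) (hn : 2 ≤ n) :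
    Real.exp (-1 + 1/(2*(n:ℝ))) ≤ (1 - 1/(n:ℝ)) ^ (n-1) := by
  have hn' : (2:ℝ) ≤ n := by exact_mod_cast hn
  set t : ℝ := (2*n - 1)/(2*n*(n-1)) with ht
  have ht0 : 0 < t := by
    apply div_pos <;> nlinarith
  have hquad : 1 + t + t^2/2 ≤ Real.exp t := Real.quadratic_le_exp_of_nonneg ht0.le
  have hn1 : ((n:ℝ)-1) ≠ 0 := by linarith
  have hn0 : (n:ℝ) ≠ 0 := by linarith
  have hnpos : (0:ℝ) < n := by linarith
  have hkey0 : ((n:ℝ)-1) * (t + t^2/2) - 1 = 1 / (8*(n:ℝ)^2*((n:ℝ)-1)) := by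
    rw [ht]; field_simp; ring
  have hstep : 1 ≤ ((n:ℝ)-1) * (t + t^2/2) := by
    have hp : 0 < 1 / (8*(n:ℝ)^2*((n:ℝ)-1)) := by
      apply div_pos one_pos; nlinarith
    linarith [hkey0]
  have hpoly : 1 ≤ (1 - 1/(n:ℝ)) * (1 + t + t^2/2) := by
    have hrw : (1 - 1/(n:ℝ)) = ((n:ℝ)-1)/n := by field_simp
    rw [hrw, div_mul_eq_mul_div, le_div_iff₀ hnpos]
    nlinarith [hstep]
  have hkey : Real.exp (-t) ≤ 1 - 1/n := by
    rw [Real.exp_neg, inv_le_iff_one_le_mul₀ (Real.exp_pos t)]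
    calc (1:ℝ) ≤ (1 - 1/(n:ℝ)) * (1 + t + t^2/2) := hpoly
      _ ≤ (1 - 1/n) * Real.exp t := by
          apply mul_le_mul_of_nonneg_left hquad
          rw [sub_nonneg, div_le_one (by linarith)]; linarith
  calc Real.exp (-1 + 1/(2*(n:ℝ)))
      = Real.exp (((n-1:ℕ):ℝ) * (-t)) := by
        congr 1
        rw [Nat.cast_sub (by omega), Nat.cast_one, ht]
        field_simp
        ring
    _ = (Real.exp (-t)) ^ (n-1) := by rw [← Real.exp_nat_mul]
    _ ≤ (1 - 1/(n:ℝ)) ^ (n-1) := pow_le_pow_left₀ (Real.exp_pos _).le hkey _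

/-- For positive integers `K`, `I` with `K ∣ I+1` and `I+1 > K`, the BR-DRM gain
`η = (1 - K/(I+1))^((I+1)/K - 1) / (1 - 1/(I+1))^I` satisfies `1 ≤ η ≤ e`. -/
theorem eta_bounds (K I : ℕ) (hK : 0 < K) (hI : 0 < I)
    (hdvd : K ∣ I + 1) (hlt : K < I + 1) :
    1 ≤ (1 - (K : ℝ) / (I + 1)) ^ ((I + 1) / K - 1) / (1 - 1 / ((I : ℝ) + 1)) ^ I ∧
    (1 - (K : ℝ) / (I + 1)) ^ ((I + 1) / K - 1) / (1 - 1 / ((I : ℝ) + 1)) ^ I ≤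
      Real.exp 1 := by
  obtain ⟨M, hNM⟩ := hdvd
  have hI' : (1:ℝ) ≤ I := by exact_mod_cast hI
  have hN2 : 2 ≤ I + 1 := by omega
  -- the denominator D
  have hDeq : (1 - 1 / ((I:ℝ) + 1)) ^ I = (1 - 1/((I+1:ℕ):ℝ)) ^ ((I+1) - 1) := by
    norm_num
  have hDlow : Real.exp (-1) ≤ (1 - 1 / ((I:ℝ) + 1)) ^ I := by
    rw [hDeq]
    refine le_trans ?_ (exp_le_pow_aux (I+1) hN2)
    apply Real.exp_le_exp.mpr
    push_cast
    have : (0:ℝ) < 1/(2*((I:ℝ)+1)) := by positivity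
    linarith
  have hDpos : 0 < (1 - 1 / ((I:ℝ) + 1)) ^ I := lt_of_lt_of_le (Real.exp_pos _) hDlow
  rcases eq_or_lt_of_le (Nat.one_le_iff_ne_zero.mpr hK.ne') with hK1 | hK2
  · -- K = 1 : the ratio is exactly 1
    have hK1 : K = 1 := hK1.symm
    subst hK1
    have hnum : (1 - (1:ℕ) / ((I:ℝ) + 1)) ^ ((I + 1) / 1 - 1) =
        (1 - 1 / ((I:ℝ) + 1)) ^ I := by norm_num
    rw [hnum, div_self hDpos.ne']
    exact ⟨le_refl 1, by linarith [Real.add_one_le_exp (1:ℝ)]⟩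
  · -- K ≥ 2
    have hM2 : 2 ≤ M := by nlinarith [hNM, hlt]
    have hMdiv : (I + 1) / K = M := by rw [hNM, Nat.mul_div_cancel_left _ hK]
    have hM0 : (0:ℝ) < M := by exact_mod_cast (by omega : 0 < M)
    have hbase : 1 - (K : ℝ) / (I + 1) = 1 - 1/((M:ℕ):ℝ) := by
      have hKM : ((I:ℝ) + 1) = (K:ℝ) * M := by exact_mod_cast hNM
      have hK0 : (K:ℝ) ≠ 0 := by positivity
      rw [hKM]
      congr 1
      rw [div_eq_div_iff (by positivity) hM0.ne']
      ring
    rw [hMdiv, hbase]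
    have hUlow : Real.exp (-1 + 1/(2*(M:ℝ))) ≤ (1 - 1/((M:ℕ):ℝ)) ^ (M-1) :=
      exp_le_pow_aux M hM2
    have hUhigh : (1 - 1/((M:ℕ):ℝ)) ^ (M-1) ≤ 1 := by
      apply pow_le_one₀
      · rw [sub_nonneg, div_le_one hM0]; exact_mod_cast (by omega : 1 ≤ M)
      · have : 0 < 1/(M:ℝ) := by positivity
        linarith
    have hDhigh : (1 - 1 / ((I:ℝ) + 1)) ^ I ≤ Real.exp (-1 + 1/((I:ℝ)+1)) := by
      rw [hDeq]
      refine le_trans (pow_le_exp_aux (I+1) hN2) ?_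
      apply Real.exp_le_exp.mpr
      push_cast
      linarith
    have h2MN : 2 * M ≤ I + 1 := by
      calc 2 * M ≤ K * M := Nat.mul_le_mul_right _ hK2
        _ = I + 1 := hNM.symm
    constructor
    · rw [le_div_iff₀ hDpos, one_mul]
      calc (1 - 1 / ((I:ℝ) + 1)) ^ I ≤ Real.exp (-1 + 1/((I:ℝ)+1)) := hDhigh
        _ ≤ Real.exp (-1 + 1/(2*(M:ℝ))) := by
            apply Real.exp_le_exp.mpr
            have h2MN' : 2 * (M:ℝ) ≤ (I:ℝ) + 1 := by exact_mod_cast h2MN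
            have := one_div_le_one_div_of_le (by positivity : (0:ℝ) < 2*(M:ℝ)) h2MN'
            linarith
        _ ≤ (1 - 1/((M:ℕ):ℝ)) ^ (M-1) := hUlow
    · rw [div_le_iff₀ hDpos]
      calc (1 - 1/((M:ℕ):ℝ)) ^ (M-1) ≤ 1 := hUhigh
        _ = Real.exp 1 * Real.exp (-1) := by rw [← Real.exp_add]; norm_num
        _ ≤ Real.exp 1 * (1 - 1 / ((I:ℝ) + 1)) ^ I := by
            apply mul_le_mul_of_nonneg_left hDlow (Real.exp_pos 1).le
end

section
/- In a finite best-response potential game (a game admitting a function φ such that for every player n and every opponent profile σ_{-n}, the set of maximizers of the player's utility over its own strategies equals the set of maximizers of φ over that player's strategies), every sequential best-response improvement path is finite and terminates at a Nash equilibrium. -/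
/-- A single best-response improvement step: player `n` switches to a strategy `s`
that is a best response to `σ₋ₙ` and strictly improves its utility. -/
def BRStep {ι : Type*} [DecidableEq ι] {S : ι → Type*}
    (R : ι → (∀ i, S i) → ℝ) (σ τ : ∀ i, S i) : Prop :=
  ∃ (n : ι) (s : S n),
    τ = Function.update σ n s ∧
    (∀ s' : S n, R n (Function.update σ n s') ≤ R n τ) ∧
    R n σ < R n τ

/-- In a finite best-response potential game (the maximizers of each player's utility
over its own strategies coincide with the maximizers of `φ`), every sequential
best-response improvement path is finite (there is no infinite path), and any profile
from which no best-response improvement step is possible is a Nash equilibrium. -/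
theorem br_potential_game_paths_finite_and_terminate_at_nash
    {ι : Type*} [Fintype ι] [DecidableEq ι]
    (S : ι → Type*) [∀ i, Fintype (S i)] [∀ i, Nonempty (S i)]
    (R : ι → (∀ i, S i) → ℝ) (φ : (∀ i, S i) → ℝ)
    (hbr : ∀ (n : ι) (σ : ∀ i, S i),
      {s : S n | ∀ s' : S n, R n (Function.update σ n s') ≤ R n (Function.update σ n s)}
      = {s : S n | ∀ s' : S n, φ (Function.update σ n s') ≤ φ (Function.update σ n s)}) :
    (¬ ∃ path : ℕ → ∀ i, S i, ∀ t, BRStep R (path t) (path (t + 1))) ∧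
    (∀ σ : ∀ i, S i, (¬ ∃ τ, BRStep R σ τ) →
      ∀ (n : ι) (s : S n), R n (Function.update σ n s) ≤ R n σ) := by
  have key : ∀ σ τ, BRStep R σ τ → φ σ < φ τ := by
    rintro σ τ ⟨n, s, rfl, hmax, hlt⟩
    have hs : s ∈ {s : S n | ∀ s', φ (Function.update σ n s') ≤ φ (Function.update σ n s)} := by
      rw [← hbr]; exact hmax
    have h1 : φ σ ≤ φ (Function.update σ n s) := by
      have := hs (σ n); rwa [Function.update_eq_self] at this
    rcases lt_or_eq_of_le h1 with h | h
    · exact h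
    · exfalso
      have hσn : (σ n) ∈ {s : S n | ∀ s', φ (Function.update σ n s') ≤ φ (Function.update σ n s)} := by
        intro s'
        rw [Function.update_eq_self, h]
        exact hs s'
      rw [← hbr] at hσn
      have := hσn s
      rw [Function.update_eq_self] at this
      exact absurd hlt (not_lt.2 this)
  constructor
  · rintro ⟨path, hpath⟩
    have hmono : StrictMono (fun t => φ (path t)) :=
      strictMono_nat_of_lt_succ fun t => key _ _ (hpath t)
    have hfin : (Set.range (fun t => φ (path t))).Finite :=
      Set.Finite.subset (Set.finite_range φ) (Set.range_comp_subset_range path φ)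
    exact (Set.infinite_range_of_injective hmono.injective) hfin
  · intro σ hno n s
    obtain ⟨sm, hsm⟩ := Finite.exists_max (fun s => R n (Function.update σ n s))
    by_contra h
    push_neg at h
    exact hno ⟨Function.update σ n sm, n, sm, rfl, fun s' => hsm s',
      lt_of_lt_of_le h (hsm s)⟩
end

section
/- Consider the fairness game: N users, K channels, each user n chooses σ_n = (k_n, p_n) with k_n ∈ {1,…,K} and p_n ∈ [0,1]; the interference graph gives neighbor sets I_n; the cooperative utility is F_n(σ) = log(u_n(k_n)·p_n) − Σ_{i ∈ I_n, k_i = k_n} log(1/(1−p_i)) − log(1/(1−p_n))·|{i ∈ I_n : k_i = k_n}|. Then the function φ(σ) = Σ_n [log(u_n(k_n)) + log p_n − Σ_{i ∈ I_n, k_i = k_n} log(1/(1−p_i))] is an exact potential: for every n, every σ_{-n}, and every pair of strategies σ_n^{(1)}, σ_n^{(2)} of user n, F_n(σ_n^{(2)}, σ_{-n}) − F_n(σ_n^{(1)}, σ_{-n}) = φ(σ_n^{(2)}, σ_{-n}) − φ(σ_n^{(1)}, σ_{-n}). -/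
/-- Cooperative (fair) utility of user `n` in the fairness game. -/
noncomputable def coopUtility {N K : ℕ} (Ngh : Fin N → Finset (Fin N))
    (u : Fin N → Fin K → ℝ) (σ : Fin N → Fin K × ℝ) (n : Fin N) : ℝ :=
  Real.log (u n (σ n).1 * (σ n).2)
    - ∑ i ∈ (Ngh n).filter (fun i => (σ i).1 = (σ n).1), Real.log (1 / (1 - (σ i).2))
    - Real.log (1 / (1 - (σ n).2)) *
        ((Ngh n).filter (fun i => (σ i).1 = (σ n).1)).card

/-- The sum of log-rates in the fairness game. -/
noncomputable def fairPotential {N K : ℕ} (Ngh : Fin N → Finset (Fin N))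
    (u : Fin N → Fin K → ℝ) (σ : Fin N → Fin K × ℝ) : ℝ :=
  ∑ n, (Real.log (u n (σ n).1) + Real.log (σ n).2
    - ∑ i ∈ (Ngh n).filter (fun i => (σ i).1 = (σ n).1), Real.log (1 / (1 - (σ i).2)))

private lemma sum_split_erase {α : Type*} [DecidableEq α] (t : Finset α) (a : α) (g : α → ℝ) :
    ∑ i ∈ t, g i = (∑ i ∈ t.erase a, g i) + if a ∈ t then g a else 0 := by
  by_cases h : a ∈ t
  · rw [if_pos h, Finset.sum_erase_add t g h]
  · rw [if_neg h, Finset.erase_eq_of_notMem h, add_zero]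

private lemma aux_key (N K : ℕ) (Ngh : Fin N → Finset (Fin N))
    (hsymm : ∀ i n, i ∈ Ngh n ↔ n ∈ Ngh i) (hirr : ∀ n, n ∉ Ngh n)
    (u : Fin N → Fin K → ℝ) (hu : ∀ n k, 0 < u n k)
    (σ : Fin N → Fin K × ℝ) (n : Fin N) (s : Fin K × ℝ)
    (hs : s.2 ∈ Set.Ioo (0 : ℝ) 1) :
    fairPotential Ngh u (Function.update σ n s)
      - coopUtility Ngh u (Function.update σ n s) n
    = ∑ m ∈ Finset.univ.erase n, (Real.log (u m (σ m).1) + Real.log (σ m).2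
        - ∑ i ∈ ((Ngh m).erase n).filter (fun i => (σ i).1 = (σ m).1),
            Real.log (1 / (1 - (σ i).2))) := by
  set σ' := Function.update σ n s with hσ'
  have hσ'n : σ' n = s := Function.update_self n s σ
  have hσ'i : ∀ i, i ≠ n → σ' i = σ i := fun i hi => Function.update_of_ne hi s σ
  set L : ℝ := Real.log (1 / (1 - s.2)) with hL
  -- the n-term of the potential
  have hA : (Real.log (u n (σ' n).1) + Real.log (σ' n).2
      - ∑ i ∈ (Ngh n).filter (fun i => (σ' i).1 = (σ' n).1), Real.log (1 / (1 - (σ' i).2)))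
      = Real.log (u n s.1) + Real.log s.2
        - ∑ i ∈ (Ngh n).filter (fun i => (σ i).1 = s.1), Real.log (1 / (1 - (σ i).2)) := by
    rw [hσ'n]
    congr 1
    apply Finset.sum_congr
    · apply Finset.filter_congr
      intro i hi
      have hin : i ≠ n := fun h => hirr n (h ▸ hi)
      rw [hσ'i i hin]
    · intro i hi
      have hin : i ≠ n := fun h => hirr n (h ▸ (Finset.mem_filter.mp hi).1)
      rw [hσ'i i hin]
  -- the filter in coopUtility for σ'
  have hfilt : (Ngh n).filter (fun i => (σ' i).1 = (σ' n).1)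
      = (Ngh n).filter (fun i => (σ i).1 = s.1) := by
    apply Finset.filter_congr
    intro i hi
    have hin : i ≠ n := fun h => hirr n (h ▸ hi)
    rw [hσ'i i hin, hσ'n]
  -- coopUtility
  have hB : coopUtility Ngh u σ' n
      = Real.log (u n s.1) + Real.log s.2
        - ∑ i ∈ (Ngh n).filter (fun i => (σ i).1 = s.1), Real.log (1 / (1 - (σ i).2))
        - L * ((Ngh n).filter (fun i => (σ i).1 = s.1)).card := by
    unfold coopUtility
    rw [hfilt, hσ'n, Real.log_mul (ne_of_gt (hu n s.1)) (ne_of_gt hs.1)]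
    congr 2
    apply Finset.sum_congr rfl
    intro i hi
    have hin : i ≠ n := fun h => hirr n (h ▸ (Finset.mem_filter.mp hi).1)
    rw [hσ'i i hin]
  -- the other terms
  have hC : ∀ m ∈ Finset.univ.erase n,
      (Real.log (u m (σ' m).1) + Real.log (σ' m).2
        - ∑ i ∈ (Ngh m).filter (fun i => (σ' i).1 = (σ' m).1), Real.log (1 / (1 - (σ' i).2)))
      = (Real.log (u m (σ m).1) + Real.log (σ m).2
        - ∑ i ∈ ((Ngh m).erase n).filter (fun i => (σ i).1 = (σ m).1),
            Real.log (1 / (1 - (σ i).2)))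
        - (if n ∈ Ngh m ∧ s.1 = (σ m).1 then L else 0) := by
    intro m hm
    have hmn : m ≠ n := (Finset.mem_erase.mp hm).1
    rw [hσ'i m hmn]
    have h1 : ∑ i ∈ (Ngh m).filter (fun i => (σ' i).1 = (σ m).1),
        Real.log (1 / (1 - (σ' i).2))
        = ∑ i ∈ Ngh m, if (σ' i).1 = (σ m).1 then Real.log (1 / (1 - (σ' i).2)) else 0 :=
      Finset.sum_filter _ _
    rw [h1, sum_split_erase (Ngh m) n]
    have h2 : ∑ i ∈ (Ngh m).erase n,
        (if (σ' i).1 = (σ m).1 then Real.log (1 / (1 - (σ' i).2)) else 0)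
        = ∑ i ∈ ((Ngh m).erase n).filter (fun i => (σ i).1 = (σ m).1),
            Real.log (1 / (1 - (σ i).2)) := by
      rw [Finset.sum_filter]
      apply Finset.sum_congr rfl
      intro i hi
      rw [hσ'i i (Finset.mem_erase.mp hi).1]
    have h3 : (if n ∈ Ngh m then
          (if (σ' n).1 = (σ m).1 then Real.log (1 / (1 - (σ' n).2)) else 0) else 0)
        = if n ∈ Ngh m ∧ s.1 = (σ m).1 then L else 0 := by
      rw [hσ'n]
      by_cases h : n ∈ Ngh m <;> by_cases h' : s.1 = (σ m).1 <;> simp [h, h', hL]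
    rw [h2, h3]
    ring
  -- sum of the correction terms
  have hD : ∑ m ∈ Finset.univ.erase n, (if n ∈ Ngh m ∧ s.1 = (σ m).1 then L else 0)
      = L * ((Ngh n).filter (fun i => (σ i).1 = s.1)).card := by
    have h0 : ∑ m ∈ Finset.univ.erase n, (if n ∈ Ngh m ∧ s.1 = (σ m).1 then L else 0)
        = ∑ m : Fin N, (if n ∈ Ngh m ∧ s.1 = (σ m).1 then L else 0) := by
      rw [sum_split_erase Finset.univ n (fun m => if n ∈ Ngh m ∧ s.1 = (σ m).1 then L else 0)]
      simp [hirr n]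
    rw [h0]
    have h1 : ∀ m : Fin N, (if n ∈ Ngh m ∧ s.1 = (σ m).1 then L else 0)
        = if m ∈ (Ngh n).filter (fun i => (σ i).1 = s.1) then L else 0 := by
      intro m
      congr 1
      simp only [Finset.mem_filter, eq_iff_iff]
      constructor
      · rintro ⟨h, h'⟩; exact ⟨(hsymm m n).mpr h, h'.symm⟩
      · rintro ⟨h, h'⟩; exact ⟨(hsymm m n).mp h, h'.symm⟩
    simp_rw [h1]
    rw [Finset.sum_ite_mem, Finset.univ_inter, Finset.sum_const, nsmul_eq_mul, mul_comm]
  -- put everything together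
  unfold fairPotential
  rw [← Finset.sum_erase_add Finset.univ _ (Finset.mem_univ n), hA, hB,
    Finset.sum_congr rfl hC, Finset.sum_sub_distrib, hD]
  ring

/-- The fairness game is an exact potential game with potential `Σ_n log R_n(σ)`:
for every user `n`, fixed strategies of the others, and any two strategies of `n`,
the change in `n`'s cooperative utility equals the change in the potential. -/
theorem fairness_game_exact_potential (N K : ℕ)
    (Ngh : Fin N → Finset (Fin N))
    (hsymm : ∀ i n, i ∈ Ngh n ↔ n ∈ Ngh i) (hirr : ∀ n, n ∉ Ngh n)
    (u : Fin N → Fin K → ℝ) (hu : ∀ n k, 0 < u n k)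
    (σ : Fin N → Fin K × ℝ) (hp : ∀ i, (σ i).2 ∈ Set.Ioo (0 : ℝ) 1)
    (n : Fin N) (s₁ s₂ : Fin K × ℝ)
    (hs₁ : s₁.2 ∈ Set.Ioo (0 : ℝ) 1) (hs₂ : s₂.2 ∈ Set.Ioo (0 : ℝ) 1) :
    coopUtility Ngh u (Function.update σ n s₂) n
      - coopUtility Ngh u (Function.update σ n s₁) n
    = fairPotential Ngh u (Function.update σ n s₂)
      - fairPotential Ngh u (Function.update σ n s₁) := by
  have h₁ := aux_key N K Ngh hsymm hirr u hu σ n s₁ hs₁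
  have h₂ := aux_key N K Ngh hsymm hirr u hu σ n s₂ hs₂
  linarith
end

section
/- At any best-response equilibrium of the single-channel rate-maximization game on an I-regular graph with K channels, equal collision-free utility u > 0, and common attempt probability P = K/(I+1) with K | (I+1) and I+1 > K, every user's expected rate satisfies R_n ≥ u·(K/(I+1))·(1 − K/(I+1))^{(I+1)/K − 1}. -/
/-- At any best-response equilibrium of the single-channel rate-maximization game on an
`I`-regular graph with `K` channels, equal collision-free utility `u > 0`, and common
attempt probability `P = K/(I+1)` with `K ∣ I+1` and `I+1 > K`, every user's expected
rate `R_n = u·P·(1-P)^{|I_n(k_n)|}` satisfies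
`R_n ≥ u·(K/(I+1))·(1 - K/(I+1))^{(I+1)/K - 1}`. -/
theorem equilibrium_rate_lower_bound (N K I : ℕ) (hK : 0 < K)
    (hdvd : K ∣ I + 1) (hIK : K < I + 1)
    (Ngh : Fin N → Finset (Fin N)) (hreg : ∀ n, (Ngh n).card = I)
    (c : Fin N → Fin K) (u : ℝ) (hu : 0 < u)
    (P : ℝ) (hP : P = (K : ℝ) / (I + 1))
    (heq : ∀ (n : Fin N) (k : Fin K),
      u * P * (1 - P) ^ ((Ngh n).filter (fun i => c i = k)).card ≤
        u * P * (1 - P) ^ ((Ngh n).filter (fun i => c i = c n)).card) :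
    ∀ n : Fin N,
      u * ((K : ℝ) / (I + 1)) * (1 - (K : ℝ) / (I + 1)) ^ ((I + 1) / K - 1) ≤
        u * P * (1 - P) ^ ((Ngh n).filter (fun i => c i = c n)).card := by
  intro n
  obtain ⟨m, hm⟩ := hdvd
  have hm0 : m ≠ 0 := by rintro rfl; simp at hm
  obtain ⟨m', rfl⟩ : ∃ m', m = m' + 1 := ⟨m - 1, by omega⟩
  have hKm : K * (m' + 1) = K * m' + K := by ring
  have h1 : (I + 1) / K = m' + 1 := by rw [hm]; exact Nat.mul_div_cancel_left _ hK
  have hsum : ∑ k : Fin K, ((Ngh n).filter (fun i => c i = k)).card = I := by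
    rw [← hreg n]
    exact (Finset.card_eq_sum_card_fiberwise (fun x _ => Finset.mem_univ (c x))).symm
  have hex : ∃ k : Fin K, ((Ngh n).filter (fun i => c i = k)).card ≤ m' := by
    by_contra h
    push_neg at h
    have hge : K * (m' + 1) ≤ ∑ k : Fin K, ((Ngh n).filter (fun i => c i = k)).card := by
      calc K * (m' + 1) = ∑ _k : Fin K, (m' + 1) := by
            simp [Finset.sum_const, mul_comm]
        _ ≤ _ := Finset.sum_le_sum (fun k _ => h k)
    omega
  obtain ⟨k, hk⟩ := hex
  have hP0 : 0 ≤ P := by rw [hP]; positivity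
  have hP1 : 1 - P ≤ 1 := by linarith
  have hP1' : 0 ≤ 1 - P := by
    rw [hP]
    have : (K : ℝ) ≤ (I : ℝ) + 1 := by exact_mod_cast Nat.le_of_lt hIK
    have hpos : (0:ℝ) < (I:ℝ) + 1 := by positivity
    rw [sub_nonneg, div_le_one hpos]
    exact this
  have hmono : (1 - P) ^ ((I + 1) / K - 1) ≤
      (1 - P) ^ ((Ngh n).filter (fun i => c i = k)).card := by
    apply pow_le_pow_of_le_one hP1' hP1
    omega
  have h2 : u * P * (1 - P) ^ ((I + 1) / K - 1) ≤
      u * P * (1 - P) ^ ((Ngh n).filter (fun i => c i = k)).card := by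
    apply mul_le_mul_of_nonneg_left hmono
    positivity
  calc u * ((K : ℝ) / (I + 1)) * (1 - (K : ℝ) / (I + 1)) ^ ((I + 1) / K - 1)
      = u * P * (1 - P) ^ ((I + 1) / K - 1) := by rw [hP]
    _ ≤ u * P * (1 - P) ^ ((Ngh n).filter (fun i => c i = k)).card := h2
    _ ≤ _ := heq n k
end
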